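/- arXiv:2601.00674 — 2 statements merged into one kernel-verified Lean document; each statement's English description precedes it below -/
import Mathlib

section
/- Let w, w' ∈ S_n. Then w' ≤ w in the Bruhat order if and only if for every 1 ≤ k ≤ n and 1 ≤ l ≤ n one has w'[k,l] ≤ w[k,l], where w[k,l] := #{a : 1 ≤ a ≤ k and w(a) ≥ l}. -/
/-!
A length-decreasing transposition `w ↦ w * swap i j` with `i < j` forces `w j < w i`, and then
lowers `w[k,l]` by one exactly when `i < k ≤ j` and `w j < l ≤ w i` (one-indexed), leaving the
other entries unchanged; this gives the forward direction. Conversely, if `w'` is dominated by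
`w ≠ w'`, let `i` be the first position where they differ; then `w' i < w i`. Swapping `i` with the
first `j > i` such that `w' i ≤ w j < w i` gives a shorter `v = w * swap i j` which still
dominates `w'`, and induction on the length of `w` concludes.
-/

/-- The length of a permutation: its number of inversions. -/
def invLen {n : ℕ} (w : Equiv.Perm (Fin n)) : ℕ :=
  (Finset.univ.filter (fun p : Fin n × Fin n => p.1 < p.2 ∧ w p.2 < w p.1)).card

/-- One step of the Bruhat order: `w'` is obtained from `w` by multiplication by a
transposition which decreases the length. -/
def BruhatStep {n : ℕ} (w w' : Equiv.Perm (Fin n)) : Prop :=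
  ∃ i j : Fin n, i ≠ j ∧ w' = w * Equiv.swap i j ∧ invLen w' < invLen w

/-- Bruhat order: `w' ≤_B w` iff `w'` is obtained from `w` by a sequence of
multiplications by transpositions, each decreasing the length. -/
def BruhatLE {n : ℕ} (w' w : Equiv.Perm (Fin n)) : Prop :=
  Relation.ReflTransGen BruhatStep w w'

/-- `w[k,l] = #{a : 1 ≤ a ≤ k, w(a) ≥ l}` (here positions and values of
`w : Perm (Fin n)` are shifted to `1,...,n` by adding one). -/
def bcount {n : ℕ} (w : Equiv.Perm (Fin n)) (k l : ℕ) : ℕ :=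
  (Finset.univ.filter (fun a : Fin n => (a : ℕ) + 1 ≤ k ∧ l ≤ (w a : ℕ) + 1)).card

open Finset Equiv

variable {n : ℕ}

theorem Finset.card_filter_lt_card_filter {α : Type*} {s : Finset α} {p q : α → Prop}
    [DecidablePred p] [DecidablePred q] (hpq : ∀ a ∈ s, p a → q a) {a : α} (ha : a ∈ s)
    (hp : ¬p a) (hq : q a) : #(s.filter p) < #(s.filter q) :=
  card_lt_card <| (ssubset_iff_of_subset (monotone_filter_right s hpq)).2
    ⟨a, mem_filter.2 ⟨ha, hq⟩, fun h => hp (mem_filter.1 h).2⟩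

theorem exists_first_ne {α β : Type*} [Preorder α] [WellFoundedLT α] {f g : α → β}
    (h : f ≠ g) : ∃ i, f i ≠ g i ∧ ∀ a < i, f a = g a := by
  obtain ⟨i, hi, hmin⟩ := exists_minimal_of_wellFoundedLT (fun a => f a ≠ g a)
    (Function.ne_iff.1 h)
  exact ⟨i, hi, fun a hai => by_contra fun ha => (hmin ha hai.le).not_gt hai⟩

def inversions (w : Perm (Fin n)) : Finset (Fin n × Fin n) :=
  {p | p.1 < p.2 ∧ w p.2 < w p.1}

@[simp] theorem mem_inversions {w : Perm (Fin n)} {p : Fin n × Fin n} :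
    p ∈ inversions w ↔ p.1 < p.2 ∧ w p.2 < w p.1 := by
  simp [inversions]

theorem card_inversions (w : Perm (Fin n)) : #(inversions w) = invLen w := rfl

theorem invLen_mul_swap_lt {w : Perm (Fin n)} {i j : Fin n} (hij : i < j) (hw : w j < w i) :
    invLen (w * swap i j) < invLen w := by
  rw [← card_inversions, ← card_inversions]
  set s := swap i j
  -- `φ` is an involution on increasing pairs mapping the inversions of `w * s` into those of `w`.
  let φ : Fin n × Fin n → Fin n × Fin n := fun p => if s p.1 < s p.2 then (s p.1, s p.2) else p
  have hφ : Set.LeftInvOn φ φ {p | p.1 < p.2} := fun p (hp : p.1 < p.2) => by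
    by_cases h : s p.1 < s p.2 <;> simp [φ, h, s, hp]
  have hmaps : Set.MapsTo φ (inversions (w * s)) ((inversions w).erase (i, j)) := by
    rintro ⟨a, b⟩ hp
    simp only [coe_erase, mem_inversions, Perm.mul_apply, Set.mem_sdiff, mem_coe] at hp ⊢
    simp only [φ]
    split_ifs with h
    · refine ⟨⟨h, hp.2⟩, fun hab => ?_⟩
      obtain ⟨rfl, rfl⟩ : a = j ∧ b = i := by simpa [s, Prod.ext_iff, swap_apply_eq_iff] using hab
      exact hij.not_gt hp.1
    -- `s` reverses `a < b` only for `(i, j)`, `(i, b)` with `b < j` and `(a, j)` with `i < a`.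
    · simp only [s, swap_apply_def] at h hp
      split_ifs at h hp <;> grind
  calc #(inversions (w * s))
      ≤ #((inversions w).erase (i, j)) :=
        card_le_card_of_injOn φ hmaps (hφ.injOn.mono fun p hp => (mem_inversions.1 hp).1)
    _ < #(inversions w) := card_erase_lt_of_mem (by simp [hij, hw])

theorem bcount_eq_sum (w : Perm (Fin n)) (k l : ℕ) :
    bcount w k l = ∑ a : Fin n, if (a : ℕ) < k ∧ l ≤ (w a : ℕ) + 1 then 1 else 0 := by
  simp only [bcount, card_filter, Nat.add_one_le_iff]

theorem bcount_mul_swap_add {w : Perm (Fin n)} {i j : Fin n} (hij : i < j) (hw : w j < w i)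
    (k l : ℕ) :
    bcount (w * swap i j) k l +
        (if (i : ℕ) < k ∧ k ≤ j ∧ (w j : ℕ) + 1 < l ∧ l ≤ (w i : ℕ) + 1 then 1 else 0) =
      bcount w k l := by
  -- After reindexing by the transposition, only the terms at `i` and `j` differ.
  rw [bcount_eq_sum, bcount_eq_sum, ← Equiv.sum_comp (swap i j)]
  simp only [Perm.mul_apply, swap_apply_self]
  rw [← sum_add_sum_compl {i, j}, ← sum_add_sum_compl {i, j}, sum_pair hij.ne, sum_pair hij.ne]
  have hrest :
      ∑ a ∈ {i, j}ᶜ, (if ((swap i j a : Fin n) : ℕ) < k ∧ l ≤ (w a : ℕ) + 1 then 1 else 0) =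
        ∑ a ∈ {i, j}ᶜ, if (a : ℕ) < k ∧ l ≤ (w a : ℕ) + 1 then 1 else 0 :=
    sum_congr rfl fun a ha => by
      simp only [mem_compl, mem_insert, mem_singleton, not_or] at ha
      rw [swap_apply_of_ne_of_ne ha.1 ha.2]
  rw [hrest, swap_apply_left, swap_apply_right]
  split_ifs <;> omega

theorem BruhatStep.invLen_lt {w v : Perm (Fin n)} (h : BruhatStep w v) : invLen v < invLen w := by
  obtain ⟨-, -, -, -, h⟩ := h
  exact h

theorem lt_of_invLen_mul_swap_lt {w : Perm (Fin n)} {i j : Fin n} (hij : i < j)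
    (h : invLen (w * swap i j) < invLen w) : w j < w i := by
  refine (lt_or_gt_of_ne fun he => hij.ne (w.injective he).symm).resolve_right fun hw => ?_
  have := invLen_mul_swap_lt (w := w * swap i j) hij (by simpa using hw)
  simp only [mul_assoc, swap_mul_self, mul_one] at this
  exact this.not_gt h

theorem BruhatStep.bcount_le {w v : Perm (Fin n)} (h : BruhatStep w v) (k l : ℕ) :
    bcount v k l ≤ bcount w k l := by
  obtain ⟨i, j, hij, rfl, hlen⟩ := h
  wlog hlt : i < j generalizing i j
  · exact swap_comm i j ▸ this j i hij.symm (swap_comm i j ▸ hlen) (hij.lt_or_gt.resolve_left hlt)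
  exact (bcount_mul_swap_add hlt (lt_of_invLen_mul_swap_lt hlt hlen) k l).symm ▸ le_self_add

theorem BruhatLE.bcount_le {u w : Perm (Fin n)} (h : BruhatLE u w) (k l : ℕ) :
    bcount u k l ≤ bcount w k l := by
  induction h with
  | refl => rfl
  | tail _ hstep ih => exact (hstep.bcount_le k l).trans ih

theorem apply_le_apply_of_bcount_le {u w : Perm (Fin n)} {i : Fin n} (hagree : ∀ a < i, u a = w a)
    (h : bcount u (i + 1) (u i + 1) ≤ bcount w (i + 1) (u i + 1)) : u i ≤ w i := by
  by_contra! hlt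
  refine h.not_gt (card_filter_lt_card_filter (fun a _ ha => ?_) (mem_univ i) ?_ ?_)
  · rcases (show a ≤ i by omega).lt_or_eq with hai | rfl
    · rwa [hagree a hai]
    · omega
  all_goals omega

theorem exists_first_between {u w : Perm (Fin n)} {i : Fin n} (hagree : ∀ a < i, u a = w a)
    (hui : u i < w i) :
    ∃ j, i < j ∧ u i ≤ w j ∧ w j < w i ∧ ∀ a, i < a → a < j → w a < u i ∨ w i ≤ w a := by
  obtain ⟨j₀, hj₀⟩ := w.surjective (u i)
  have hij₀ : i < j₀ := by
    rcases lt_trichotomy i j₀ with h | rfl | h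
    · exact h
    · exact absurd hj₀ hui.ne'
    · exact absurd (u.injective ((hagree j₀ h).trans hj₀)) h.ne
  obtain ⟨j, ⟨hij, huj, hwj⟩, hmin⟩ := exists_minimal_of_wellFoundedLT
    (fun a => i < a ∧ u i ≤ w a ∧ w a < w i) ⟨j₀, hij₀, hj₀.ge, hj₀ ▸ hui⟩
  refine ⟨j, hij, huj, hwj, fun a hia haj => ?_⟩
  by_contra! h
  exact (hmin ⟨hia, h⟩ haj.le).not_gt haj

theorem bcount_eq_add_bcount (x : Perm (Fin n)) (k : ℕ) {l₀ l : ℕ} (hl : l₀ ≤ l) :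
    bcount x k l₀ =
      #{a : Fin n | (a : ℕ) < k ∧ l₀ ≤ (x a : ℕ) + 1 ∧ (x a : ℕ) + 1 < l} + bcount x k l := by
  rw [bcount_eq_sum, bcount_eq_sum, card_filter, ← sum_add_distrib]
  exact sum_congr rfl fun a _ => by split_ifs <;> omega

theorem bcount_lt_of_first_diff {u w : Perm (Fin n)} {i j : Fin n} {k l : ℕ}
    (hagree : ∀ a < i, u a = w a) (huj : u i ≤ w j)
    (hgap : ∀ a, i < a → a < j → w a < u i ∨ w i ≤ w a)
    (hk : i < k ∧ k ≤ j) (hl : (w j : ℕ) + 1 < l ∧ l ≤ (w i : ℕ) + 1)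
    (h : bcount u k (u i + 1) ≤ bcount w k (u i + 1)) : bcount u k l < bcount w k l := by
  -- By `hgap` the band of `w` only contains positions before `i`, where `u = w`;
  -- `i` lies in the band of `u` but not in that of `w`.
  have hband : #{a : Fin n | (a : ℕ) < k ∧ (u i : ℕ) + 1 ≤ (w a : ℕ) + 1 ∧ (w a : ℕ) + 1 < l} <
      #{a : Fin n | (a : ℕ) < k ∧ (u i : ℕ) + 1 ≤ (u a : ℕ) + 1 ∧ (u a : ℕ) + 1 < l} := by
    refine card_filter_lt_card_filter (fun a _ ha => ?_) (mem_univ i) (by omega) (by omega)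
    have hai : a < i := by
      by_contra! hia
      rcases hia.lt_or_eq with hia | rfl
      · have := hgap a hia (by omega); omega
      · omega
    rwa [hagree a hai]
  have := bcount_eq_add_bcount u k (l₀ := u i + 1) (l := l) (by omega)
  have := bcount_eq_add_bcount w k (l₀ := u i + 1) (l := l) (by omega)
  omega

def BcountLE (u w : Perm (Fin n)) : Prop :=
  ∀ k l : ℕ, 1 ≤ k → k ≤ n → 1 ≤ l → l ≤ n → bcount u k l ≤ bcount w k l

theorem exists_bruhatStep_of_bcountLE {u w : Perm (Fin n)} (hne : u ≠ w) (h : BcountLE u w) :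
    ∃ v, BruhatStep w v ∧ BcountLE u v := by
  obtain ⟨i, hne_i, hagree⟩ := exists_first_ne (DFunLike.coe_injective.ne hne)
  have hui : u i < w i := by
    refine (apply_le_apply_of_bcount_le hagree (h _ _ ?_ ?_ ?_ ?_)).lt_of_ne hne_i <;> omega
  obtain ⟨j, hij, huj, hwj, hgap⟩ := exists_first_between hagree hui
  refine ⟨w * swap i j, ⟨i, j, hij.ne, rfl, invLen_mul_swap_lt hij hwj⟩,
    fun k l hk hkn hl hln => ?_⟩
  have hswap := bcount_mul_swap_add hij hwj k l
  split_ifs at hswap with hreg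
  · have := bcount_lt_of_first_diff hagree huj hgap ⟨hreg.1, hreg.2.1⟩ hreg.2.2
      (h _ _ hk hkn (by omega) (by omega))
    omega
  · have := h k l hk hkn hl hln
    omega

theorem bruhatLE_of_bcountLE {u w : Perm (Fin n)} (h : BcountLE u w) : BruhatLE u w := by
  by_cases huw : u = w
  · exact huw ▸ .refl
  obtain ⟨v, hstep, hv⟩ := exists_bruhatStep_of_bcountLE huw h
  exact .head hstep (bruhatLE_of_bcountLE hv)
termination_by invLen w
decreasing_by exact hstep.invLen_lt

/-- `w' ≤_B w` iff `w'[k,l] ≤ w[k,l]` for all `1 ≤ k ≤ n`, `1 ≤ l ≤ n`. -/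
theorem bruhat_iff_bcount {n : ℕ} (w w' : Equiv.Perm (Fin n)) :
    BruhatLE w' w ↔
      ∀ k l : ℕ, 1 ≤ k → k ≤ n → 1 ≤ l → l ≤ n → bcount w' k l ≤ bcount w k l :=
  ⟨fun h k l _ _ _ _ => h.bcount_le k l, bruhatLE_of_bcountLE⟩
end

section
/- Let 𝔪 be a multisegment and let Δ < Δ' be a pair of consecutive segments in 𝔪. Let 𝔪' be the submultisegment of 𝔪 − Δ − Δ' consisting of all segments Δ̃ with a(Δ') ≤ a(Δ̃) or b(Δ') ≤ b(Δ̃). Write the segments of 𝔪 − 𝔪' − Δ − Δ' in an ascending order Δ₁,...,Δ_r and the segments of 𝔪' in an ascending order Δ₁',...,Δ_s'. Then the concatenated sequence Δ₁, ..., Δ_r, Δ, Δ', Δ₁', ..., Δ_s' is in ascending order. -/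
/-- Two segments `[a,b]`, `[a',b']` are linked if `a < a' ≤ b+1 ≤ b'` or
`a' < a ≤ b'+1 ≤ b`. -/
def Linked (s t : ℤ × ℤ) : Prop :=
  (s.1 < t.1 ∧ t.1 ≤ s.2 + 1 ∧ s.2 + 1 ≤ t.2) ∨
  (t.1 < s.1 ∧ s.1 ≤ t.2 + 1 ∧ t.2 + 1 ≤ s.2)

/-- `s < t` for linked segments: `a < a' ≤ b+1 ≤ b'`. -/
def SegLT (s t : ℤ × ℤ) : Prop := s.1 < t.1 ∧ t.1 ≤ s.2 + 1 ∧ s.2 + 1 ≤ t.2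

/-- The multiset `{[x,y]}` if `x ≤ y`, empty otherwise. -/
def seg? (x y : ℤ) : Multiset (ℤ × ℤ) := if x ≤ y then {(x, y)} else 0

/-- `IUStep m n`: `n` is obtained from `m` by one elementary intersection-union
process on a linked pair `Δ < Δ'` of `m` (dropping the intersection if empty). -/
def IUStep (m n : Multiset (ℤ × ℤ)) : Prop :=
  ∃ Δ Δ' : ℤ × ℤ, Δ ∈ m ∧ Δ' ∈ m.erase Δ ∧ SegLT Δ Δ' ∧
    n = ((m.erase Δ).erase Δ') + {(Δ.1, Δ'.2)} + seg? Δ'.1 Δ.2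

/-- `n ≤_Z m`: `n` is obtained from `m` by a (possibly empty) sequence of
elementary intersection-union processes. -/
def leZ (n m : Multiset (ℤ × ℤ)) : Prop := Relation.ReflTransGen IUStep m n

/-- `Δ < Δ'` is a pair of consecutive segments in `m`: they are linked with
`a(Δ) < a(Δ')` and no other segment `Δ''` of `m` satisfies
`a(Δ) ≤ a(Δ'') ≤ a(Δ')`, `b(Δ) ≤ b(Δ'') ≤ b(Δ')` and is linked to `Δ` or `Δ'`. -/
def Consecutive (m : Multiset (ℤ × ℤ)) (Δ Δ' : ℤ × ℤ) : Prop :=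
  Δ ∈ m ∧ Δ' ∈ m.erase Δ ∧ SegLT Δ Δ' ∧
  ∀ Δ'' ∈ (m.erase Δ).erase Δ',
    ¬(Δ.1 ≤ Δ''.1 ∧ Δ''.1 ≤ Δ'.1 ∧ Δ.2 ≤ Δ''.2 ∧ Δ''.2 ≤ Δ'.2 ∧
      (Linked Δ'' Δ ∨ Linked Δ'' Δ'))

/-- A sequence of segments is in ascending order if for any `i ≤ j`, the `i`-th and
`j`-th segments are either unlinked or the `i`-th has strictly smaller left endpoint. -/
def Ascending (l : List (ℤ × ℤ)) : Prop :=
  ∀ i j : ℕ, i ≤ j → j < l.length →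
    ¬ Linked l[i]! l[j]! ∨ (l[i]!).1 < (l[j]!).1

/-!
Ascending order is the pairwise condition `MayPrecede` (linked ⟹ strictly smaller left
endpoint), since no segment is linked to itself. A segment `s` may precede `t` as soon as
`a(s) ≤ a(t)` or `b(s) ≤ b(t)`, which settles every pair in the concatenation except
`Δᵢ` before `Δ`. There `Δᵢ` has both endpoints below those of `Δ'`; if it were linked to `Δ`
without starting left of it, it would lie between `Δ` and `Δ'` and be linked to `Δ`,
contradicting consecutiveness.
-/

def MayPrecede (s t : ℤ × ℤ) : Prop := ¬ Linked s t ∨ s.1 < t.1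

lemma not_linked_self (s : ℤ × ℤ) : ¬ Linked s s := by
  unfold Linked
  omega

lemma ascending_iff_pairwise (l : List (ℤ × ℤ)) : Ascending l ↔ l.Pairwise MayPrecede := by
  rw [List.pairwise_iff_getElem]
  constructor
  · intro h i j hi hj hij
    have := h i j hij.le hj
    rwa [getElem!_pos l i hi, getElem!_pos l j hj] at this
  · intro h i j hij hj
    have hi : i < l.length := lt_of_le_of_lt hij hj
    rw [getElem!_pos l i hi, getElem!_pos l j hj]
    rcases hij.lt_or_eq with hij | rfl
    · exact h i j hi hj hij
    · exact Or.inl (not_linked_self _)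

lemma mayPrecede_of_le_or_le {s t : ℤ × ℤ} (h : s.1 ≤ t.1 ∨ s.2 ≤ t.2) : MayPrecede s t := by
  unfold MayPrecede Linked
  omega

lemma Consecutive.mayPrecede_left {m : Multiset (ℤ × ℤ)} {Δ Δ' s : ℤ × ℤ}
    (hcons : Consecutive m Δ Δ') (hs : s ∈ (m.erase Δ).erase Δ')
    (hs₁ : s.1 < Δ'.1) (hs₂ : s.2 < Δ'.2) : MayPrecede s Δ := by
  obtain ⟨-, -, hlt, hno⟩ := hcons
  refine or_iff_not_imp_right.mpr fun hle hlink => ?_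
  have hΔs : Δ.1 < s.1 ∧ s.1 ≤ Δ.2 + 1 ∧ Δ.2 + 1 ≤ s.2 := by
    unfold Linked at hlink
    omega
  exact hno s hs ⟨by omega, by omega, by omega, by omega, Or.inl hlink⟩

theorem consecutive_concat_ascending_general (m : Multiset (ℤ × ℤ)) (Δ Δ' : ℤ × ℤ)
    (hcons : Consecutive m Δ Δ')
    (l1 l2 : List (ℤ × ℤ))
    (hl2 : (l2 : Multiset (ℤ × ℤ)) =
      ((m.erase Δ).erase Δ').filter (fun s => Δ'.1 ≤ s.1 ∨ Δ'.2 ≤ s.2))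
    (hl1 : (l1 : Multiset (ℤ × ℤ)) =
      ((m.erase Δ).erase Δ') -
        ((m.erase Δ).erase Δ').filter (fun s => Δ'.1 ≤ s.1 ∨ Δ'.2 ≤ s.2))
    (h1 : Ascending l1) (h2 : Ascending l2) :
    Ascending (l1 ++ Δ :: Δ' :: l2) := by
  rw [Multiset.sub_filter_eq_filter_not] at hl1
  have mem1 : ∀ s ∈ l1, s ∈ (m.erase Δ).erase Δ' ∧ s.1 < Δ'.1 ∧ s.2 < Δ'.2 := fun s hs => by
    simpa [← Multiset.mem_coe, hl1] using hs
  have mem2 : ∀ t ∈ l2, Δ'.1 ≤ t.1 ∨ Δ'.2 ≤ t.2 := fun t ht => by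
    simp only [← Multiset.mem_coe, hl2, Multiset.mem_filter] at ht
    exact ht.2
  have hlt : SegLT Δ Δ' := hcons.2.2.1
  rw [ascending_iff_pairwise] at h1 h2 ⊢
  simp only [List.pairwise_append, List.pairwise_cons, List.mem_cons]
  refine ⟨h1, ⟨fun t ht => ?_, fun t ht => ?_, h2⟩, fun s hs t ht => ?_⟩
  · rcases ht with rfl | ht
    · exact Or.inr hlt.1
    · exact mayPrecede_of_le_or_le (by have := mem2 t ht; unfold SegLT at hlt; omega)
  · exact mayPrecede_of_le_or_le (mem2 t ht)
  · obtain ⟨hsM, hs₁, hs₂⟩ := mem1 s hs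
    rcases ht with rfl | rfl | ht
    · exact hcons.mayPrecede_left hsM hs₁ hs₂
    · exact Or.inr hs₁
    · exact mayPrecede_of_le_or_le (by have := mem2 t ht; omega)

/-- Let `Δ < Δ'` be a consecutive pair in `𝔪`, let `𝔪'` consist of the segments
`Δ̃` of `𝔪 − Δ − Δ'` with `a(Δ') ≤ a(Δ̃)` or `b(Δ') ≤ b(Δ̃)`, and write
`𝔪 − 𝔪' − Δ − Δ'` in an ascending order `Δ₁,...,Δ_r` and `𝔪'` in an ascending
order `Δ₁',...,Δ_s'`. Then `Δ₁, ..., Δ_r, Δ, Δ', Δ₁', ..., Δ_s'` is ascending. -/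
theorem consecutive_concat_ascending (m : Multiset (ℤ × ℤ)) (Δ Δ' : ℤ × ℤ)
    (hsegs : ∀ s ∈ m, s.1 ≤ s.2)
    (hcons : Consecutive m Δ Δ')
    (l1 l2 : List (ℤ × ℤ))
    (hl2 : (l2 : Multiset (ℤ × ℤ)) =
      ((m.erase Δ).erase Δ').filter (fun s => Δ'.1 ≤ s.1 ∨ Δ'.2 ≤ s.2))
    (hl1 : (l1 : Multiset (ℤ × ℤ)) =
      ((m.erase Δ).erase Δ') -
        ((m.erase Δ).erase Δ').filter (fun s => Δ'.1 ≤ s.1 ∨ Δ'.2 ≤ s.2))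
    (h1 : Ascending l1) (h2 : Ascending l2) :
    Ascending (l1 ++ Δ :: Δ' :: l2) :=
  consecutive_concat_ascending_general m Δ Δ' hcons l1 l2 hl2 hl1 h1 h2
end
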